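/- (1) Every locally arcwise connected topological space satisfying the first axiom of countability is arc-generated. (2) Every CW complex is arc-generated. -/

import Mathlib

set_option autoImplicit false

open Set Function Topology

noncomputable section

/-- The topology on `X` coinduced by all continuous curves `ℝ → X`. -/
def arcGen (X : Type) [TopologicalSpace X] : TopologicalSpace X :=
  ⨆ f : {f : ℝ → X // Continuous f}, TopologicalSpace.coinduced f.1 inferInstance

/-- A topological space is arc-generated if its topology is final for the set of all
continuous curves `ℝ → X`, i.e. coincides with the topology coinduced by them. -/
def IsArcGenerated (X : Type) [t : TopologicalSpace X] : Prop := t = arcGen X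


/-!
For (1), suppose `U` has open preimage under every curve but is not a neighbourhood of `x ∈ U`.
Take a decreasing path-connected neighbourhood basis `Vₙ` at `x` and points `yₙ ∈ Vₙ \ U`.
Concatenating the loops `x ⇝ yₙ ⇝ x` inside `Vₙ` on the intervals `[(n+1)⁻¹, n⁻¹]` gives a
curve that is continuous at `0` because the loops shrink to `x`; its preimage of `U` is then an
open neighbourhood of `0` missing the times `(n + 1/2)⁻¹ → 0` at which it visits `yₙ`.

For (2), arc-generated spaces are the spaces generated by the single space `ℝ`, a class closed
under colimits in `TopCat`; a CW complex is built from the empty space and disks (convex, hence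
arc-generated by (1)) by coproducts, pushouts and a sequential colimit.
-/

theorem arcGen_le (X : Type) [t : TopologicalSpace X] : arcGen X ≤ t :=
  iSup_le fun f ↦ f.2.coinduced_le

theorem isArcGenerated_of_forall {X : Type} [TopologicalSpace X]
    (h : ∀ U : Set X, (∀ f : ℝ → X, Continuous f → IsOpen (f ⁻¹' U)) → IsOpen U) :
    IsArcGenerated X := by
  refine le_antisymm (fun U hU ↦ h U fun f hf ↦ ?_) (arcGen_le X)
  rw [arcGen, isOpen_iSup_iff] at hU
  exact hU ⟨f, hf⟩

open Filter

lemma locallyFinite_Icc_natCast : LocallyFinite fun n : ℕ ↦ Icc (n : ℝ) (n + 1) := by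
  intro s
  refine ⟨Iio (s + 1), Iio_mem_nhds (lt_add_one s), (finite_Iic ⌈s⌉₊).subset ?_⟩
  rintro n ⟨r, ⟨hnr, -⟩, hrs⟩
  have : (n : ℝ) < ⌈s⌉₊ + 1 := by linarith [Nat.le_ceil s, mem_Iio.1 hrs]
  exact Nat.lt_add_one_iff.1 (by exact_mod_cast this)

namespace Path

variable {X : Type*} [TopologicalSpace X] {x : X}

/-- Runs through the loop `q n` on `[n, n + 1]` and stays at `x` on `(-∞, 0]`. -/
def seqConcat (q : ℕ → Path x x) (s : ℝ) : X := (q ⌊s⌋₊).extend (s - ⌊s⌋₊)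

variable (q : ℕ → Path x x)

lemma seqConcat_of_nonpos {s : ℝ} (hs : s ≤ 0) : seqConcat q s = x := by
  simp [seqConcat, Nat.floor_of_nonpos hs, Path.extend_of_le_zero _ hs]

lemma seqConcat_eqOn_Icc (n : ℕ) :
    EqOn (seqConcat q) (fun s ↦ (q n).extend (s - n)) (Icc n (n + 1)) := by
  rintro s ⟨hns, hsn⟩
  rcases hsn.lt_or_eq with hsn | rfl
  · have : ⌊s⌋₊ = n := (Nat.floor_eq_iff ((Nat.cast_nonneg n).trans hns)).2 ⟨hns, hsn⟩
    simp [seqConcat, this]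
  · have : ⌊(n : ℝ) + 1⌋₊ = n + 1 := by exact_mod_cast Nat.floor_natCast (n + 1)
    simp [seqConcat, this]

lemma seqConcat_mem_range (s : ℝ) : seqConcat q s ∈ range (q ⌊s⌋₊) :=
  (q ⌊s⌋₊).extend_range ▸ mem_range_self _

lemma continuous_seqConcat : Continuous (seqConcat q) := by
  refine (locallyFinite_Icc_natCast.option_elim' (Iic 0)).continuous ?_ ?_ ?_
  · refine eq_univ_of_forall fun s ↦ mem_iUnion.2 ?_
    rcases le_total s 0 with hs | hs
    · exact ⟨none, hs⟩
    · exact ⟨some ⌊s⌋₊, Nat.floor_le hs, (Nat.lt_floor_add_one s).le⟩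
  · rintro (_ | n)
    exacts [isClosed_Iic, isClosed_Icc]
  · rintro (_ | n)
    · exact continuousOn_const.congr fun s hs ↦ seqConcat_of_nonpos q hs
    · exact ((q n).continuous_extend.comp (continuous_sub_right _)).continuousOn.congr
        (seqConcat_eqOn_Icc q n)

lemma tendsto_seqConcat (hq : Tendsto (fun n ↦ range (q n)) atTop (𝓝 x).smallSets) :
    Tendsto (seqConcat q) atTop (𝓝 x) := by
  refine fun W hW ↦ mem_map.2 ?_
  obtain ⟨N, hN⟩ := eventually_atTop.1 (tendsto_smallSets_iff.1 hq W hW)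
  filter_upwards [eventually_ge_atTop (N : ℝ)] with s hs
  exact hN _ (Nat.le_floor hs) (seqConcat_mem_range q s)

end Path

theorem exists_continuous_curve_through_loops {X : Type*} [TopologicalSpace X] {x : X}
    (q : ℕ → Path x x) (hq : Tendsto (fun n ↦ range (q n)) atTop (𝓝 x).smallSets) :
    ∃ γ : ℝ → X, Continuous γ ∧ γ 0 = x ∧
      ∀ n : ℕ, ∀ s ∈ Icc (0 : ℝ) 1, γ (n + s)⁻¹ = (q n).extend s := by
  -- `γ t = seqConcat q t⁻¹` is constantly `x` for `t ≤ 0` (note `0⁻¹ = 0`)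
  have hγ0 : Path.seqConcat q 0⁻¹ = x := Path.seqConcat_of_nonpos q (by simp)
  refine ⟨fun t ↦ Path.seqConcat q t⁻¹, continuous_iff_continuousAt.2 fun t ↦ ?_, hγ0,
    fun n s hs ↦ ?_⟩
  · rcases ne_or_eq t 0 with ht | rfl
    · exact (Path.continuous_seqConcat q).continuousAt.comp (continuousAt_inv₀ ht)
    refine continuousAt_iff_continuous_left_right.2 ⟨?_, ?_⟩
    · exact continuousWithinAt_const.congr
        (fun s hs ↦ Path.seqConcat_of_nonpos q (inv_nonpos.2 hs)) hγ0
    · refine continuousWithinAt_Ioi_iff_Ici.1 ?_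
      rw [ContinuousWithinAt, hγ0]
      exact (Path.tendsto_seqConcat q hq).comp tendsto_inv_nhdsGT_zero
  · dsimp only
    rw [inv_inv, Path.seqConcat_eqOn_Icc q n ⟨by linarith [hs.1], by linarith [hs.2]⟩]
    simp

theorem isArcGenerated_of_firstCountableTopology (X : Type) [TopologicalSpace X]
    [LocallyPathConnectedSpace X] [FirstCountableTopology X] : IsArcGenerated X := by
  refine isArcGenerated_of_forall fun U hU ↦ isOpen_iff_mem_nhds.2 fun x hxU ↦ ?_
  by_contra hx
  obtain ⟨V, hV, hVx⟩ := (path_connected_basis x).exists_antitone_subbasis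
  choose y hyV hyU using fun n ↦ not_subset.1 fun h ↦ hx (mem_of_superset (hV n).1 h)
  choose p hp using fun n ↦ (hV n).2.joinedIn x (mem_of_mem_nhds (hV n).1) (y n) (hyV n)
  let q n := (p n).trans (p n).symm
  have hq : Tendsto (fun n ↦ range (q n)) atTop (𝓝 x).smallSets := by
    refine hVx.tendsto_smallSets.smallSets_mono (Eventually.of_forall fun n ↦ ?_)
    rw [Path.trans_range, Path.symm_range, union_self]
    exact range_subset_iff.2 (hp n)
  obtain ⟨γ, hγ, hγ0, hγq⟩ := exists_continuous_curve_through_loops q hq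
  have hγy (n : ℕ) : γ (n + 1 / 2)⁻¹ = y n := by
    rw [hγq n _ ⟨by norm_num, by norm_num⟩, Path.extend_trans_of_le_half _ _ le_rfl]
    norm_num
  have ht : Tendsto (fun n : ℕ ↦ ((n : ℝ) + 1 / 2)⁻¹) atTop (𝓝 0) :=
    tendsto_inv_atTop_zero.comp (tendsto_atTop_add_const_right _ _ tendsto_natCast_atTop_atTop)
  obtain ⟨n, hn⟩ := (ht.eventually ((hU γ hγ).mem_nhds (by simpa [hγ0]))).exists
  exact hyU n (hγy n ▸ hn)

theorem arcGen_eq_generatedBy (X : Type) [TopologicalSpace X] :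
    arcGen X = TopologicalSpace.generatedBy (fun _ : Unit ↦ ℝ) :=
  le_antisymm (iSup_le fun f ↦ le_iSup₂_of_le () ⟨f.1, f.2⟩ le_rfl)
    (iSup₂_le fun _ f ↦ le_iSup_of_le ⟨f, f.2⟩ le_rfl)

theorem isArcGenerated_iff_isGeneratedBy {X : Type} [TopologicalSpace X] :
    IsArcGenerated X ↔ IsGeneratedBy (fun _ : Unit ↦ ℝ) X := by
  rw [IsGeneratedBy.iff_le_generatedBy, ← arcGen_eq_generatedBy, IsArcGenerated]
  exact ⟨le_of_eq, fun h ↦ le_antisymm h (arcGen_le X)⟩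

namespace Topology.IsGeneratedBy

open CategoryTheory Limits

variable {ι : Type*} {X : ι → Type*} [∀ i, TopologicalSpace (X i)]

theorem coinduced_le_generatedBy {Y Z : Type*} [tY : TopologicalSpace Y] [TopologicalSpace Z]
    [IsGeneratedBy X Y] {g : Y → Z} (hg : Continuous g) :
    tY.coinduced g ≤ TopologicalSpace.generatedBy X :=
  (IsGeneratedBy.coinduced (X := X) g).le_generatedBy.trans
    (TopologicalSpace.generatedBy_mono hg.coinduced_le)

theorem of_isColimit {J : Type*} [Category J] {F : J ⥤ TopCat} {c : Cocone F} (hc : IsColimit c)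
    (h : ∀ j, IsGeneratedBy X (F.obj j)) : IsGeneratedBy X c.pt :=
  TopCat.coinduced_of_isColimit c hc ▸ IsGeneratedBy.iSup fun _ ↦ IsGeneratedBy.coinduced _

theorem of_isPushout {Z A B P : TopCat} {f : Z ⟶ A} {g : Z ⟶ B} {inl : A ⟶ P} {inr : B ⟶ P}
    (hP : IsPushout f g inl inr) [IsGeneratedBy X A] [IsGeneratedBy X B] :
    IsGeneratedBy X P := by
  refine iff_le_generatedBy.2 ((TopCat.coinduced_of_isColimit _ hP.isColimit).le.trans ?_)
  refine iSup_le fun j ↦ ?_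
  rcases j with _ | ⟨_ | _⟩
  · -- the leg out of `Z` factors through `A`
    show Z.str.coinduced (inl ∘ f) ≤ _
    rw [← coinduced_compose]
    exact (coinduced_mono f.hom.continuous.coinduced_le).trans
      (coinduced_le_generatedBy inl.hom.continuous)
  · exact coinduced_le_generatedBy (Y := A) inl.hom.continuous
  · exact coinduced_le_generatedBy (Y := B) inr.hom.continuous

end Topology.IsGeneratedBy

open CategoryTheory Limits

theorem isArcGenerated_disk (n : ℕ) : IsArcGenerated (TopCat.disk.{0} n) := by
  let D := Metric.closedBall (0 : EuclideanSpace ℝ (Fin n)) 1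
  have : LocallyPathConnectedSpace D := (convex_closedBall _ _).locallyPathConnectedSpace
  have := isArcGenerated_iff_isGeneratedBy.1 (isArcGenerated_of_firstCountableTopology D)
  exact isArcGenerated_iff_isGeneratedBy.2 Homeomorph.ulift.symm.isQuotientMap.isGeneratedBy

theorem TopCat.CWComplex.isArcGenerated {C : TopCat.{0}} (hC : TopCat.CWComplex C) :
    IsArcGenerated C := by
  have hsk (n : ℕ) : IsGeneratedBy (fun _ : Unit ↦ ℝ) (hC.F.obj n) := by
    induction n with
    | zero =>
      have : IsGeneratedBy (fun _ : Unit ↦ ℝ) (⊥_ TopCat) :=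
        .of_isColimit (colimit.isColimit _) fun j ↦ j.as.elim
      exact (TopCat.homeoOfIso hC.isoBot.symm).isQuotientMap.isGeneratedBy
    | succ n ih =>
      let c := hC.attachCells n (not_isMax n)
      have : IsGeneratedBy (fun _ : Unit ↦ ℝ) c.cofan₂.pt :=
        .of_isColimit c.isColimit₂ fun _ ↦
          isArcGenerated_iff_isGeneratedBy.1 (isArcGenerated_disk _)
      exact .of_isPushout c.isPushout
  exact isArcGenerated_iff_isGeneratedBy.2 (.of_isColimit hC.isColimit hsk)

/-- **Statement 6.** (1) Every locally arcwise connected topological space satisfying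
the first axiom of countability is arc-generated. (2) Every CW complex is
arc-generated. -/
theorem locPathConnected_and_CW_arcGenerated :
    (∀ (X : Type) [TopologicalSpace X], LocPathConnectedSpace X →
      FirstCountableTopology X → IsArcGenerated X) ∧
    ∀ (C : TopCat.{0}) (_ : TopCat.CWComplex C),
      IsArcGenerated ↥C :=
  ⟨fun X _ hX hX' ↦ @isArcGenerated_of_firstCountableTopology X _ hX hX',
    fun _ hC ↦ hC.isArcGenerated⟩
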